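/- Let X be a projective scheme over an algebraically closed field. If P is a property of line bundles on X, then the following are equivalent: (1) there exists a line bundle L₀ such that P(L₀ ⊗ A) holds for every ample line bundle A on X; (2) there exists a class D ∈ N¹(X) such that P(L) holds for every line bundle L whose numerical class lies in the translated cone D + Nef(X). -/
import Mathlib


/-- The embedding of the lattice `N¹(X) ≅ ℤ^ρ` into `N¹_ℝ(X) ≅ ℝ^ρ`. -/
def latCoe {ρ : ℕ} (z : Fin ρ → ℤ) : Fin ρ → ℝ := fun i => (z i : ℝ)

lemma latCoe_add {ρ : ℕ} (a b : Fin ρ → ℤ) : latCoe (a + b) = latCoe a + latCoe b := by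
  funext i; simp [latCoe]

lemma latCoe_sub {ρ : ℕ} (a b : Fin ρ → ℤ) : latCoe (a - b) = latCoe a - latCoe b := by
  funext i; simp [latCoe]

/-- Abstract model of a projective scheme `X`: `Pic` is the
Picard group (written additively, `+` is `⊗`), `cls : Pic → ℤ^ρ` the surjective
numerical class map onto `N¹(X) ≅ ℤ^ρ`, `Nef ⊆ ℝ^ρ` the nef cone (a
full-dimensional convex cone), and a line bundle is ample iff its numerical
class lies in the interior `Amp = interior Nef` (Nakai–Moishezon–Kleiman).
Then for any property `P` of line bundles the following are equivalent:
(1) there is a line bundle `L₀` with `P (L₀ ⊗ A)` for every ample `A`;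
(2) there is a class `D ∈ N¹(X)` with `P L` for every line bundle `L` whose
numerical class lies in the translated cone `D + Nef`. -/
theorem stmt_19 (ρ : ℕ) (Pic : Type*) [AddCommGroup Pic]
    (cls : Pic →+ (Fin ρ → ℤ)) (hcls : Function.Surjective cls)
    (Nef : Set (Fin ρ → ℝ))
    (hclosed : IsClosed Nef) (hconv : Convex ℝ Nef)
    (hcone : ∀ c : ℝ, 0 < c → ∀ x ∈ Nef, c • x ∈ Nef)
    (hfull : (interior Nef).Nonempty)
    (Ample : Pic → Prop)
    (hAmple : ∀ L, Ample L ↔ latCoe (cls L) ∈ interior Nef)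
    (P : Pic → Prop) :
    (∃ L₀ : Pic, ∀ A : Pic, Ample A → P (L₀ + A)) ↔
    (∃ D : Fin ρ → ℤ, ∀ L : Pic, latCoe (cls L) - latCoe D ∈ Nef → P L) := by
  -- Nef is closed under addition
  have hadd : ∀ a ∈ Nef, ∀ b ∈ Nef, a + b ∈ Nef := by
    intro a ha b hb
    have h2 : ((1:ℝ)/2) • a + ((1:ℝ)/2) • b ∈ Nef :=
      hconv ha hb (by norm_num) (by norm_num) (by norm_num)
    have h3 := hcone 2 (by norm_num) _ h2
    have : (2:ℝ) • (((1:ℝ)/2) • a + ((1:ℝ)/2) • b) = a + b := by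
      rw [smul_add, smul_smul, smul_smul]; norm_num
    rwa [this] at h3
  -- find a lattice point z with a ball of radius s > 0 around it inside Nef
  obtain ⟨u, hu⟩ := hfull
  rw [mem_interior_iff_mem_nhds, Metric.mem_nhds_iff] at hu
  obtain ⟨r, hr, hball⟩ := hu
  obtain ⟨n, hn⟩ := exists_nat_gt (1 / r)
  have hnr : 1 < (n : ℝ) * r := by
    rw [div_lt_iff₀ hr] at hn; linarith
  have hnpos : (0:ℝ) < n := by
    by_contra h
    push_neg at h
    nlinarith
  -- the scaled ball is inside Nef
  have hscaled : Metric.ball ((n:ℝ) • u) ((n:ℝ) * r) ⊆ Nef := by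
    intro x hx
    have hxu : (n:ℝ)⁻¹ • x ∈ Metric.ball u r := by
      rw [Metric.mem_ball, dist_eq_norm] at hx ⊢
      have : (n:ℝ)⁻¹ • x - u = (n:ℝ)⁻¹ • (x - (n:ℝ) • u) := by
        rw [smul_sub, smul_smul, inv_mul_cancel₀ (ne_of_gt hnpos), one_smul]
      rw [this, norm_smul]
      rw [Real.norm_eq_abs, abs_of_pos (inv_pos.mpr hnpos)]
      calc (n:ℝ)⁻¹ * ‖x - (n:ℝ) • u‖ < (n:ℝ)⁻¹ * ((n:ℝ) * r) := by
            exact mul_lt_mul_of_pos_left hx (inv_pos.mpr hnpos)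
        _ = r := by field_simp
    have := hcone (n:ℝ) hnpos _ (hball hxu)
    rwa [smul_smul, mul_inv_cancel₀ (ne_of_gt hnpos), one_smul] at this
  -- the lattice point
  set z : Fin ρ → ℤ := fun i => round ((n:ℝ) * u i) with hz
  have hzclose : ‖latCoe z - (n:ℝ) • u‖ ≤ 1/2 := by
    apply pi_norm_le_iff_of_nonneg (by norm_num) |>.mpr
    intro i
    simp only [latCoe, Pi.sub_apply, Pi.smul_apply, smul_eq_mul, Real.norm_eq_abs]
    rw [abs_sub_comm]
    exact abs_sub_round _
  set s : ℝ := (n:ℝ) * r - 1/2 with hs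
  have hspos : 0 < s := by rw [hs]; linarith
  have hzball : Metric.ball (latCoe z) s ⊆ Nef := by
    intro x hx
    apply hscaled
    rw [Metric.mem_ball, dist_eq_norm] at hx ⊢
    calc ‖x - (n:ℝ) • u‖ = ‖(x - latCoe z) + (latCoe z - (n:ℝ) • u)‖ := by
          rw [sub_add_sub_cancel]
      _ ≤ ‖x - latCoe z‖ + ‖latCoe z - (n:ℝ) • u‖ := norm_add_le _ _
      _ < s + 1/2 := add_lt_add_of_lt_of_le hx hzclose
      _ = (n:ℝ) * r := by rw [hs]; ring
  have hzmem : latCoe z ∈ Nef := hzball (Metric.mem_ball_self hspos)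
  -- translation by z maps Nef into the interior
  have hzint : ∀ a ∈ Nef, latCoe z + a ∈ interior Nef := by
    intro a ha
    rw [mem_interior_iff_mem_nhds, Metric.mem_nhds_iff]
    refine ⟨s, hspos, ?_⟩
    intro x hx
    have hx' : x - a ∈ Metric.ball (latCoe z) s := by
      rw [Metric.mem_ball, dist_eq_norm] at hx ⊢
      have : x - a - latCoe z = x - (latCoe z + a) := by ring
      rwa [this]
    have : (x - a) + a ∈ Nef := hadd _ (hzball hx') _ ha
    simpa using this
  constructor
  · rintro ⟨L₀, hL₀⟩
    refine ⟨cls L₀ + z, ?_⟩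
    intro L hL
    have hamp : Ample (L - L₀) := by
      rw [hAmple, map_sub, latCoe_sub]
      have : latCoe (cls L) - latCoe (cls L₀) =
          latCoe z + (latCoe (cls L) - latCoe (cls L₀ + z)) := by
        rw [latCoe_add]; ring
      rw [this]
      exact hzint _ hL
    have := hL₀ (L - L₀) hamp
    simpa using this
  · rintro ⟨D, hD⟩
    obtain ⟨L₀, hL₀⟩ := hcls (D + z)
    refine ⟨L₀, ?_⟩
    intro A hA
    apply hD
    rw [map_add, hL₀, latCoe_add, latCoe_add]
    have : latCoe D + latCoe z + latCoe (cls A) - latCoe D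
        = latCoe z + latCoe (cls A) := by ring
    rw [this]
    exact hadd _ hzmem _ ((hAmple A).mp hA |> interior_subset)
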